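/- arXiv:2408.12189 — 2 statements merged into one kernel-verified Lean document; each statement's English description precedes it below -/
import Mathlib

section
/- The Petersen graph admits no packing (1,2^5)-coloring, i.e., its vertex set cannot be partitioned into one independent set and five 2-packings. -/
/-!
The Petersen graph has diameter 2, so a 2-packing in it has at most one vertex, and five
2-packings cover at most five of its ten vertices. The remaining five vertices would form an
independent set, but the independence number of the Petersen graph is 4: its vertices split
into the outer 5-cycle of the pairs `{i, i + 1}` and the inner pentagram of the pairs
`{i, i + 2}`, and any three vertices of a 5-cycle contain an edge.
-/

/-- The Petersen graph, realized as the Kneser graph `K(5,2)`: vertices are the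
2-element subsets of a 5-element set, adjacent iff the subsets are disjoint. -/
def petersen : SimpleGraph {s : Finset (Fin 5) // s.card = 2} where
  Adj a b := Disjoint a.1 b.1
  symm := ⟨fun _ _ h => h.symm⟩
  loopless := ⟨fun a h => by
    simp only [disjoint_self] at h
    have := a.2
    rw [h] at this
    simp at this⟩

/-- A packing `(1,2^k)`-coloring of `G`, given as a function to `Fin (k+1)`:
the class of color `0` is an independent set, and each of the other `k` classes
is a 2-packing (any two distinct vertices in it are at distance at least 3,
where unreachable pairs count as infinitely far apart). -/
def IsPackingOneTwoColoring {V : Type*} (G : SimpleGraph V) (k : ℕ)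
    (c : V → Fin (k + 1)) : Prop :=
  (∀ u v : V, G.Adj u v → ¬(c u = 0 ∧ c v = 0)) ∧
  (∀ u v : V, u ≠ v → c u = c v → c u ≠ 0 → (¬G.Reachable u v ∨ 3 ≤ G.dist u v))

open Finset SimpleGraph

namespace IsPackingOneTwoColoring

variable {V : Type*} {G : SimpleGraph V} {k : ℕ} {c : V → Fin (k + 1)}

lemma eq_of_color_eq (hc : IsPackingOneTwoColoring G k c) (hG : G.ediam ≤ 2) {u v : V}
    (huv : c u = c v) (hu : c u ≠ 0) : u = v := by
  by_contra hne
  have hedist : G.edist u v ≤ 2 := G.edist_le_ediam.trans hG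
  have hreach : G.Reachable u v :=
    edist_ne_top_iff_reachable.mp (ne_top_of_le_ne_top (by decide) hedist)
  rcases hc.2 u v hne huv hu with h | h
  · exact h hreach
  · have hdist : (G.dist u v : ℕ∞) ≤ 2 := hreach.coe_dist_eq_edist ▸ hedist
    norm_cast at hdist
    omega

theorem card_le_add_indepNum [Fintype V] (hc : IsPackingOneTwoColoring G k c)
    (hG : G.ediam ≤ 2) : Fintype.card V ≤ k + G.indepNum := by
  classical
  have hzero : #{v | c v = 0} ≤ G.indepNum :=
    IsIndepSet.card_le_indepNum fun u hu v hv _ hadj => by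
      simp only [coe_filter, mem_univ, true_and, Set.mem_ofPred_eq] at hu hv
      exact hc.1 u v hadj ⟨hu, hv⟩
  have hnonzero : #{v | c v ≠ 0} ≤ k := by
    calc #{v | c v ≠ 0}
        ≤ #((univ : Finset (Fin (k + 1))).erase 0) :=
          card_le_card_of_injOn c (fun v hv => by simpa using hv)
            fun u hu v _ huv => hc.eq_of_color_eq hG huv (by simpa using hu)
      _ = k := by simp
  have hsplit : #{v | c v = 0} + #{v | c v ≠ 0} = Fintype.card V :=
    card_filter_add_card_filter_not _
  omega

end IsPackingOneTwoColoring

theorem SimpleGraph.indepNum_le_card_mul_of_fibers {V ι : Type*} [Fintype V] [Fintype ι]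
    {G : SimpleGraph V} (p : V → ι) (r : ℕ)
    (hp : ∀ i, ∀ s : Finset V, G.IsIndepSet s → (∀ v ∈ s, p v = i) → #s ≤ r) :
    G.indepNum ≤ Fintype.card ι * r := by
  classical
  obtain ⟨s, hs⟩ := G.exists_isNIndepSet_indepNum
  calc G.indepNum = #s := hs.card_eq.symm
    _ = ∑ i, #{v ∈ s | p v = i} := card_eq_sum_card_fiberwise fun v _ => mem_univ (p v)
    _ ≤ ∑ _i : ι, r := sum_le_sum fun i _ =>
        hp i _ (hs.isIndepSet.mono (filter_subset _ s)) fun v hv => (mem_filter.mp hv).2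
    _ = Fintype.card ι * r := by simp

lemma SimpleGraph.IsIndepSet.card_le_two {V : Type*} {G : SimpleGraph V} {s : Finset V}
    (hs : G.IsIndepSet s)
    (h : ∀ u ∈ s, ∀ v ∈ s, ∀ w ∈ s, u ≠ v → u ≠ w → v ≠ w → G.Adj u v ∨ G.Adj u w ∨ G.Adj v w) :
    #s ≤ 2 := by
  by_contra! hcard
  obtain ⟨u, hu, v, hv, w, hw, huv, huw, hvw⟩ := two_lt_card.mp hcard
  rcases h u hu v hv w hw huv huw hvw with hadj | hadj | hadj
  · exact hs hu hv huv hadj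
  · exact hs hu hw huw hadj
  · exact hs hv hw hvw hadj

namespace Petersen

abbrev Vertex := {s : Finset (Fin 5) // s.card = 2}

instance : DecidableRel petersen.Adj := fun a b =>
  inferInstanceAs (Decidable (Disjoint a.1 b.1))

lemma card_vertex : Fintype.card Vertex = 10 := by
  rw [Fintype.card_finset_len]
  rfl

lemma adj_or_exists_common_adj :
    ∀ u v : Vertex, u ≠ v → petersen.Adj u v ∨ ∃ w, petersen.Adj u w ∧ petersen.Adj w v := by
  decide

lemma ediam_le_two : petersen.ediam ≤ 2 := by
  refine ediam_le_iff.mpr fun u v => ?_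
  obtain rfl | huv := eq_or_ne u v
  · simp
  rcases adj_or_exists_common_adj u v huv with hadj | ⟨w, huw, hwv⟩
  · exact (edist_le_one_iff_adj_or_eq.mpr (.inl hadj)).trans (by decide)
  · exact edist_le (huw.toWalk.append hwv.toWalk) |>.trans (by simp)

def IsOuter (s : Vertex) : Bool := decide (∃ i : Fin 5, s.1 = {i, i + 1})

-- The hypotheses are bundled into one conjunction: curried, instance search for `decide` gives up.
lemma adj_of_isOuter_eq : ∀ u v w : Vertex, IsOuter u = IsOuter v ∧ IsOuter u = IsOuter w ∧
    u ≠ v ∧ u ≠ w ∧ v ≠ w → petersen.Adj u v ∨ petersen.Adj u w ∨ petersen.Adj v w := by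
  decide

lemma indepNum_le_four : petersen.indepNum ≤ 4 :=
  indepNum_le_card_mul_of_fibers IsOuter 2 fun _ _ hs hi =>
    hs.card_le_two fun u hu v hv w hw huv huw hvw => adj_of_isOuter_eq u v w
      ⟨(hi u hu).trans (hi v hv).symm, (hi u hu).trans (hi w hw).symm, huv, huw, hvw⟩

end Petersen

/-- The Petersen graph admits no packing `(1,2^5)`-coloring: its vertex set cannot
be partitioned into one independent set and five 2-packings. -/
theorem petersen_no_packing_one_two_five_coloring :
    ¬∃ c : {s : Finset (Fin 5) // s.card = 2} → Fin 6,
      IsPackingOneTwoColoring petersen 5 c := by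
  rintro ⟨c, hc⟩
  have hcard := hc.card_le_add_indepNum Petersen.ediam_le_two
  rw [Petersen.card_vertex] at hcard
  have := Petersen.indepNum_le_four
  omega
end

section
/- Let G be a cubic graph with a good coloring f using colors {1,A,B,C,D,E} (1 a 1-color, the rest 2-colors), and let u be a vertex with f(u)=1 whose two specified neighbors u1,u2 are adjacent (u,u1,u2 form a triangle). Then |N^2(u)| ≤ 4, and consequently some color from {A,B,C,D,E} does not appear on N^2(u), so u can be recolored with a 2-color. -/
/-!
Both neighbours of `u` lie on the triangle, so every vertex within distance two of `u` is a
neighbour of `u₁` or of `u₂` other than `u`; by subcubicity each contributes at most two, so at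
most four vertices surround `u`. They see at most four of the five 2-colors, and a missing one
can be put on `u`: no vertex within distance two of `u` carries it, so its class stays a
2-packing.
-/

/-- A good coloring (packing `(1,2^5)`-coloring) of `G` with colors `Fin 6`:
color `0` (the 1-color) forms an independent set, and each nonzero color class
(the 2-colors `A,B,C,D,E`) is a 2-packing: any two distinct vertices in it are at
distance at least 3 (unreachable pairs count as infinitely far apart). -/
def IsGoodColoring {V : Type*} (G : SimpleGraph V) (c : V → Fin 6) : Prop :=
  (∀ u v : V, G.Adj u v → ¬(c u = 0 ∧ c v = 0)) ∧
  (∀ u v : V, u ≠ v → c u = c v → c u ≠ 0 → (¬G.Reachable u v ∨ 3 ≤ G.dist u v))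

open Function

namespace SimpleGraph

variable {V : Type*} {G : SimpleGraph V} {u v w u₁ u₂ : V}

lemma exists_adj_adj_of_dist_eq_two (h : G.dist u w = 2) : ∃ z, G.Adj u z ∧ G.Adj z w := by
  have hr : G.Reachable u w := Reachable.of_dist_ne_zero (by omega)
  have he : G.edist u w = 2 := by rw [← hr.coe_dist_eq_edist, h]; rfl
  obtain ⟨z, hz⟩ := (edist_eq_two_iff.mp he).2.2
  rw [mem_commonNeighbors] at hz
  exact ⟨z, hz.1, hz.2.symm⟩

lemma dist_eq_one_or_two_of_lt_three (hr : G.Reachable u v) (hne : u ≠ v) (h : G.dist u v < 3) :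
    G.dist u v = 1 ∨ G.dist u v = 2 := by
  have := hr.pos_dist_of_ne hne
  omega

lemma ne_of_dist_eq_one_or_two (h : G.dist u w = 1 ∨ G.dist u w = 2) : u ≠ w := by
  rintro rfl
  simp at h

lemma setOf_dist_eq_one_or_two_subset_of_neighbor_triangle
    (hN : ∀ w, G.Adj u w ↔ w = u₁ ∨ w = u₂) (h12 : G.Adj u₁ u₂) :
    {w | G.dist u w = 1 ∨ G.dist u w = 2} ⊆
      (G.neighborSet u₁ \ {u}) ∪ (G.neighborSet u₂ \ {u}) := by
  intro w hw
  have hwu : w ∉ ({u} : Set V) := (ne_of_dist_eq_one_or_two hw).symm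
  rcases hw with h1 | h2
  · rcases (hN w).mp (dist_eq_one_iff_adj.mp h1) with rfl | rfl
    · exact Or.inr ⟨h12.symm, hwu⟩
    · exact Or.inl ⟨h12, hwu⟩
  · obtain ⟨z, huz, hzw⟩ := exists_adj_adj_of_dist_eq_two h2
    rcases (hN z).mp huz with rfl | rfl
    · exact Or.inl ⟨hzw, hwu⟩
    · exact Or.inr ⟨hzw, hwu⟩

lemma ncard_neighborSet_diff_singleton_le_two (hv : (G.neighborSet v).ncard ≤ 3)
    (h : G.Adj u v) : (G.neighborSet v \ {u}).ncard ≤ 2 := by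
  have := Set.ncard_sdiff_singleton_of_mem (show u ∈ G.neighborSet v from h.symm)
  omega

lemma ncard_setOf_dist_eq_one_or_two_le_four_of_neighbor_triangle [Finite V]
    (hsub : ∀ v, (G.neighborSet v).ncard ≤ 3)
    (hN : ∀ w, G.Adj u w ↔ w = u₁ ∨ w = u₂) (h12 : G.Adj u₁ u₂) :
    {w | G.dist u w = 1 ∨ G.dist u w = 2}.ncard ≤ 4 := by
  have h₁ := ncard_neighborSet_diff_singleton_le_two (hsub u₁) ((hN u₁).mpr (Or.inl rfl))
  have h₂ := ncard_neighborSet_diff_singleton_le_two (hsub u₂) ((hN u₂).mpr (Or.inr rfl))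
  calc _ ≤ ((G.neighborSet u₁ \ {u}) ∪ (G.neighborSet u₂ \ {u})).ncard :=
        Set.ncard_le_ncard (setOf_dist_eq_one_or_two_subset_of_neighbor_triangle hN h12)
    _ ≤ (G.neighborSet u₁ \ {u}).ncard + (G.neighborSet u₂ \ {u}).ncard :=
        Set.ncard_union_le _ _
    _ ≤ 4 := by omega

end SimpleGraph

lemma Set.exists_ne_forall_apply_ne_of_ncard_add_one_lt {α β : Type*} [Finite β] {S : Set α}
    (hS : S.Finite) (f : α → β) (a : β) (h : S.ncard + 1 < Nat.card β) :
    ∃ x ≠ a, ∀ w ∈ S, f w ≠ x := by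
  by_contra! hcover
  have huniv : Set.univ ⊆ insert a (f '' S) := by
    intro x _
    rcases eq_or_ne x a with rfl | hx
    · exact Set.mem_insert _ _
    · obtain ⟨w, hw, rfl⟩ := hcover x hx
      exact Set.mem_insert_of_mem _ ⟨w, hw, rfl⟩
  have := Set.ncard_le_ncard huniv
  rw [Set.ncard_univ] at this
  have := Set.ncard_insert_le a (f '' S)
  have := Set.ncard_image_le (f := f) hS
  omega

theorem IsGoodColoring.update {V : Type*} [DecidableEq V] {G : SimpleGraph V} {c : V → Fin 6}
    (hc : IsGoodColoring G c) {u : V} {x : Fin 6} (hx0 : x ≠ 0)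
    (hx : ∀ w, (G.dist u w = 1 ∨ G.dist u w = 2) → c w ≠ x) :
    IsGoodColoring G (update c u x) := by
  have far : ∀ v, v ≠ u → c v = x → ¬G.Reachable u v ∨ 3 ≤ G.dist u v := by
    intro v hvu hv
    by_contra! h
    exact hx v (SimpleGraph.dist_eq_one_or_two_of_lt_three h.1 hvu.symm h.2) hv
  refine ⟨fun a b hab ⟨ha, hb⟩ => ?_, fun a b hab hcab hca => ?_⟩
  · rcases eq_or_ne a u with rfl | hau
    · exact hx0 (by simpa using ha)
    rcases eq_or_ne b u with rfl | hbu
    · exact hx0 (by simpa using hb)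
    rw [update_of_ne hau] at ha
    rw [update_of_ne hbu] at hb
    exact hc.1 a b hab ⟨ha, hb⟩
  · rcases eq_or_ne a u with rfl | hau
    · rw [update_self, update_of_ne hab.symm] at hcab
      exact far b hab.symm hcab.symm
    rcases eq_or_ne b u with rfl | hbu
    · rw [update_self, update_of_ne hau] at hcab
      rw [SimpleGraph.reachable_comm, SimpleGraph.dist_comm]
      exact far a hau hcab
    rw [update_of_ne hau, update_of_ne hbu] at hcab
    rw [update_of_ne hau] at hca
    exact hc.2 a b hab hcab hca

theorem recolor_one_vertex_in_triangle_general {V : Type*} [Fintype V] [DecidableEq V] (G : SimpleGraph V)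
    (hsub : ∀ v : V, (G.neighborSet v).ncard ≤ 3)
    (f : V → Fin 6) (hf : IsGoodColoring G f)
    (u u₁ u₂ : V) (hN : ∀ w : V, G.Adj u w ↔ (w = u₁ ∨ w = u₂))
    (h12 : G.Adj u₁ u₂) :
    ({w : V | G.dist u w = 1 ∨ G.dist u w = 2}).ncard ≤ 4 ∧
    ∃ x : Fin 6, x ≠ 0 ∧ (∀ w : V, (G.dist u w = 1 ∨ G.dist u w = 2) → f w ≠ x) ∧
      IsGoodColoring G (Function.update f u x) := by
  have hS := G.ncard_setOf_dist_eq_one_or_two_le_four_of_neighbor_triangle hsub hN h12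
  obtain ⟨x, hx0, hx⟩ := Set.exists_ne_forall_apply_ne_of_ncard_add_one_lt
    (Set.toFinite {w | G.dist u w = 1 ∨ G.dist u w = 2}) f 0
    (by rw [Nat.card_fin]; omega)
  exact ⟨hS, x, hx0, hx, hf.update hx0 hx⟩

/-- Let `G` be a subcubic (maximum degree 3) graph with a good coloring `f`, and
let `u` be a vertex with `f u = 0` (color `1`) whose neighbours are exactly the
two adjacent vertices `u₁, u₂` (so `u, u₁, u₂` form a triangle). Then
`N²(u)`, the set of vertices at distance 1 or 2 from `u`, has at most 4 elements,
and consequently some 2-color does not appear on `N²(u)`, so `u` can be recolored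
with that 2-color, keeping a good coloring. -/
theorem recolor_one_vertex_in_triangle {V : Type*} [Fintype V] [DecidableEq V] (G : SimpleGraph V)
    (hsub : ∀ v : V, (G.neighborSet v).ncard ≤ 3)
    (f : V → Fin 6) (hf : IsGoodColoring G f)
    (u u₁ u₂ : V) (hN : ∀ w : V, G.Adj u w ↔ (w = u₁ ∨ w = u₂))
    (h12 : G.Adj u₁ u₂) (hu : f u = 0) :
    ({w : V | G.dist u w = 1 ∨ G.dist u w = 2}).ncard ≤ 4 ∧
    ∃ x : Fin 6, x ≠ 0 ∧ (∀ w : V, (G.dist u w = 1 ∨ G.dist u w = 2) → f w ≠ x) ∧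
      IsGoodColoring G (Function.update f u x) :=
  recolor_one_vertex_in_triangle_general G hsub f hf u u₁ u₂ hN h12
end
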